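/- (Garside lattice structure) The prefix order on B_n admits greatest common divisors and least common multiples: for all a, b ∈ B_n there exists d ∈ B_n with d ≼ a, d ≼ b, and d' ≼ d for every d' ∈ B_n satisfying d' ≼ a and d' ≼ b; and there exists m ∈ B_n with a ≼ m, b ≼ m, and m ≼ m' for every m' ∈ B_n satisfying a ≼ m' and b ≼ m'. -/

import Mathlib

/-!
Garside's proof. On positive words, the key lemma says that if `i u` and `j v` represent the same
positive braid, then `u` and `v` are equivalent to `complement i j ++ w` and `complement j i ++ w`
for a common `w`; it is proved by induction on length, the inductive step being the cube condition
on three generators. It gives cancellation and the lcm of two generators. The fundamental word `Δ`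
is left divisible by every generator and conjugation by `Δ` permutes the generators, so any two
positive words have common left and right multiples; by Ore's theorem the positive monoid then
embeds in `Bₙ`.

In `Bₙ` the prefix order is invariant under left multiplication, and every braid becomes positive
after multiplication by a suitable positive braid, so it suffices to treat positive braids. Their
lcm is built from lcms of generators by induction on the exponent sum of a common multiple, and a
common prefix of maximal exponent sum is their gcd.
-/

/-- The set of Artin braid relations in the free group on `n - 1` generators:
`σᵢσⱼ = σⱼσᵢ` for `|i - j| > 1` and `σᵢσⱼσᵢ = σⱼσᵢσⱼ` for `|i - j| = 1`. -/
def braidRels (n : ℕ) : Set (FreeGroup (Fin (n - 1))) :=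
  { r | (∃ i j : Fin (n - 1), (i : ℕ) + 1 < (j : ℕ) ∧
          r = FreeGroup.of i * FreeGroup.of j * (FreeGroup.of j * FreeGroup.of i)⁻¹) ∨
        (∃ i j : Fin (n - 1), (j : ℕ) = (i : ℕ) + 1 ∧
          r = FreeGroup.of i * FreeGroup.of j * FreeGroup.of i *
              (FreeGroup.of j * FreeGroup.of i * FreeGroup.of j)⁻¹) }

/-- The braid group on `n` strands, via the Artin presentation. -/
abbrev BraidGroup (n : ℕ) : Type := PresentedGroup (braidRels n)

/-- The standard Artin generator `σᵢ` (`0`-indexed: `i = 0, …, n - 2`). -/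
def braidGen (n : ℕ) (i : Fin (n - 1)) : BraidGroup n := PresentedGroup.of i

/-- The monoid of positive braids: the submonoid of `Bₙ` generated by `σ₁, …, σₙ₋₁`. -/
def posBraid (n : ℕ) : Submonoid (BraidGroup n) :=
  Submonoid.closure (Set.range (braidGen n))

/-- The prefix order on `Bₙ`: `a ≼ b` iff `a c = b` for some positive braid `c`. -/
def braidPrefix (n : ℕ) (a b : BraidGroup n) : Prop :=
  ∃ c ∈ posBraid n, a * c = b

namespace Submonoid

section PrefixOrder

variable {G : Type*} [Group G] (P : Submonoid G)

def LeftDvd (a b : G) : Prop := ∃ c ∈ P, a * c = b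

def IsLCM (a b l : G) : Prop :=
  P.LeftDvd a l ∧ P.LeftDvd b l ∧ ∀ l', P.LeftDvd a l' → P.LeftDvd b l' → P.LeftDvd l l'

def IsGCD (a b d : G) : Prop :=
  P.LeftDvd d a ∧ P.LeftDvd d b ∧ ∀ d', P.LeftDvd d' a → P.LeftDvd d' b → P.LeftDvd d' d

def HasCommonLeftMultiples : Prop := ∀ p ∈ P, ∀ q ∈ P, ∃ r ∈ P, ∃ r' ∈ P, r * p = r' * q

def HasCommonRightMultiples : Prop := ∀ p ∈ P, ∀ q ∈ P, ∃ r ∈ P, ∃ r' ∈ P, p * r = q * r'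

variable {P} {a b c l : G}

theorem LeftDvd.refl (a : G) : P.LeftDvd a a := ⟨1, P.one_mem, mul_one a⟩

theorem LeftDvd.trans (h₁ : P.LeftDvd a b) (h₂ : P.LeftDvd b c) : P.LeftDvd a c := by
  obtain ⟨d, hd, rfl⟩ := h₁
  obtain ⟨e, he, rfl⟩ := h₂
  exact ⟨d * e, P.mul_mem hd he, (mul_assoc a d e).symm⟩

theorem leftDvd_mul (a : G) (hc : c ∈ P) : P.LeftDvd a (a * c) := ⟨c, hc, rfl⟩

theorem leftDvd_mul_left_iff (x : G) : P.LeftDvd (x * a) (x * b) ↔ P.LeftDvd a b := by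
  simp only [LeftDvd, mul_assoc, mul_right_inj]

theorem one_leftDvd_iff : P.LeftDvd 1 a ↔ a ∈ P := by simp [LeftDvd]

theorem LeftDvd.mem (h : P.LeftDvd a b) (ha : a ∈ P) : b ∈ P := by
  obtain ⟨c, hc, rfl⟩ := h
  exact P.mul_mem ha hc

theorem IsLCM.symm (h : P.IsLCM a b l) : P.IsLCM b a l :=
  ⟨h.2.1, h.1, fun l' hb ha => h.2.2 l' ha hb⟩

theorem IsLCM.mul_left (h : P.IsLCM a b l) (x : G) : P.IsLCM (x * a) (x * b) (x * l) := by
  refine ⟨(leftDvd_mul_left_iff x).2 h.1, (leftDvd_mul_left_iff x).2 h.2.1, fun l' ha hb => ?_⟩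
  rw [← mul_inv_cancel_left x l', leftDvd_mul_left_iff] at ha hb ⊢
  exact h.2.2 _ ha hb

theorem isLCM_of_leftDvd (h : P.LeftDvd a b) : P.IsLCM a b b :=
  ⟨h, .refl b, fun _ _ hb => hb⟩

theorem IsLCM.of_isLCM_isLCM {l₁ l₂ : G}
    (hc : ∀ w, P.LeftDvd a w → P.LeftDvd b w → P.LeftDvd c w)
    (h₁ : P.IsLCM a c l₁) (h₂ : P.IsLCM b c l₂) (h : P.IsLCM l₁ l₂ l) : P.IsLCM a b l :=
  ⟨h₁.1.trans h.1, h₂.1.trans h.2.1, fun w ha hb =>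
    h.2.2 w (h₁.2.2 w ha (hc w ha hb)) (h₂.2.2 w hb (hc w ha hb))⟩

end PrefixOrder

theorem eq_one_or_exists_mul_of_mem_closure {M : Type*} [Monoid M] {S : Set M} {p : M}
    (hp : p ∈ closure S) : p = 1 ∨ ∃ s ∈ S, ∃ q ∈ closure S, p = s * q := by
  induction hp using closure_induction_left with
  | one => exact .inl rfl
  | mul_left s hs q hq _ => exact .inr ⟨s, hs, q, hq, rfl⟩

section GarsideCriterion

variable {G : Type*} [Group G] {S : Set G} {deg : G →* Multiplicative ℤ} {a b p : G}

theorem toAdd_deg_nonneg (hdeg : ∀ s ∈ S, 0 < (deg s).toAdd) (hp : p ∈ closure S) :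
    0 ≤ (deg p).toAdd := by
  induction hp using closure_induction_left with
  | one => simp
  | mul_left s hs q _ ih => rw [map_mul, toAdd_mul]; linarith [hdeg s hs]

theorem eq_one_of_toAdd_deg_nonpos (hdeg : ∀ s ∈ S, 0 < (deg s).toAdd) (hp : p ∈ closure S)
    (h : (deg p).toAdd ≤ 0) : p = 1 := by
  rcases eq_one_or_exists_mul_of_mem_closure hp with rfl | ⟨s, hs, q, hq, rfl⟩
  · rfl
  · rw [map_mul, toAdd_mul] at h
    linarith [hdeg s hs, toAdd_deg_nonneg hdeg hq]

theorem LeftDvd.toAdd_deg_le (hdeg : ∀ s ∈ S, 0 < (deg s).toAdd)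
    (h : (closure S).LeftDvd a b) : (deg a).toAdd ≤ (deg b).toAdd := by
  obtain ⟨c, hc, rfl⟩ := h
  rw [map_mul, toAdd_mul]
  linarith [toAdd_deg_nonneg hdeg hc]

/- Write `u = s u'`, `v = s' v'` with atoms `s, s'`, and let `c = s x = s' y` be their lcm, so that
`t = c r`. Then `lcm (u, v) = lcm (lcm (u, c), lcm (v, c))`, where `lcm (u, c) = s lcm (u', x)`,
`lcm (v, c) = s' lcm (v', y)` and, after cancelling `c`, the outer lcm lies below `r`: all three
are bounded by elements of smaller degree than `t`. -/
theorem exists_isLCM_of_toAdd_deg_lt (hdeg : ∀ s ∈ S, 0 < (deg s).toAdd)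
    (hatom : ∀ s ∈ S, ∀ s' ∈ S, ∃ c, (closure S).IsLCM s s' c) :
    ∀ (N : ℕ) ⦃u v t : G⦄, (deg t).toAdd < N → u ∈ closure S → v ∈ closure S →
      (closure S).LeftDvd u t → (closure S).LeftDvd v t → ∃ l, (closure S).IsLCM u v l
  | 0, _, _, _, ht, hu, _, hut, _ => absurd ht (not_lt.2 (toAdd_deg_nonneg hdeg (hut.mem hu)))
  | N + 1, _, _, t, ht, hu, hv, hut, hvt => by
    have ih := exists_isLCM_of_toAdd_deg_lt hdeg hatom N
    rcases eq_one_or_exists_mul_of_mem_closure hu with rfl | ⟨s, hs, u, hu', rfl⟩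
    · exact ⟨_, isLCM_of_leftDvd (one_leftDvd_iff.2 hv)⟩
    rcases eq_one_or_exists_mul_of_mem_closure hv with rfl | ⟨s', hs', v, hv', rfl⟩
    · exact ⟨_, (isLCM_of_leftDvd (one_leftDvd_iff.2 hu)).symm⟩
    obtain ⟨c, hc⟩ := hatom s hs s' hs'
    have hcw : ∀ w, (closure S).LeftDvd (s * u) w → (closure S).LeftDvd (s' * v) w →
        (closure S).LeftDvd c w := fun w huw hvw =>
      hc.2.2 w ((leftDvd_mul s hu').trans huw) ((leftDvd_mul s' hv').trans hvw)
    obtain ⟨r, hr, rfl⟩ := hcw t hut hvt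
    obtain ⟨x, hx, rfl⟩ := hc.1
    obtain ⟨y, hy, hyx⟩ := hc.2.1
    have hdeg_x : (deg s).toAdd + (deg x).toAdd + (deg r).toAdd < N + 1 := by
      simpa only [map_mul, toAdd_mul, Nat.cast_add, Nat.cast_one] using ht
    have hdeg_y : (deg s').toAdd + (deg y).toAdd + (deg r).toAdd < N + 1 := by
      simpa only [← hyx, map_mul, toAdd_mul, Nat.cast_add, Nat.cast_one] using ht
    have := hdeg s hs
    have := hdeg s' hs'
    have := toAdd_deg_nonneg hdeg hx
    obtain ⟨l₁, h₁⟩ := ih (t := x * r) (by rw [map_mul, toAdd_mul]; omega) hu' hx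
      ((leftDvd_mul_left_iff s).1 (by rwa [← mul_assoc])) (leftDvd_mul x hr)
    obtain ⟨l₂, h₂⟩ := ih (t := y * r) (by rw [map_mul, toAdd_mul]; omega) hv' hy
      ((leftDvd_mul_left_iff s').1 (by rwa [← mul_assoc, hyx])) (leftDvd_mul y hr)
    replace h₁ := h₁.mul_left s
    replace h₂ := hyx ▸ h₂.mul_left s'
    obtain ⟨b₁, hb₁, hl₁⟩ := h₁.2.1
    obtain ⟨b₂, hb₂, hl₂⟩ := h₂.2.1
    rw [← hl₁] at h₁
    rw [← hl₂] at h₂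
    obtain ⟨l₃, h₃⟩ := ih (t := r) (by omega) hb₁ hb₂
      ((leftDvd_mul_left_iff (s * x)).1 (h₁.2.2 _ hut (leftDvd_mul _ hr)))
      ((leftDvd_mul_left_iff (s * x)).1 (h₂.2.2 _ hvt (leftDvd_mul _ hr)))
    exact ⟨_, h₁.of_isLCM_isLCM hcw h₂ (h₃.mul_left (s * x))⟩

theorem exists_isLCM_of_leftDvd (hdeg : ∀ s ∈ S, 0 < (deg s).toAdd)
    (hatom : ∀ s ∈ S, ∀ s' ∈ S, ∃ c, (closure S).IsLCM s s' c) {u v t : G}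
    (hu : u ∈ closure S) (hv : v ∈ closure S) (hut : (closure S).LeftDvd u t)
    (hvt : (closure S).LeftDvd v t) : ∃ l, (closure S).IsLCM u v l :=
  exists_isLCM_of_toAdd_deg_lt hdeg hatom ((deg t).toAdd.toNat + 1) (by omega) hu hv hut hvt

-- The `g` with `x * g ∈ closure S` for some `x ∈ closure S` form a subgroup containing `S`.
theorem exists_mul_mem_closure (hgen : Subgroup.closure S = ⊤)
    (hleft : (closure S).HasCommonLeftMultiples) (g : G) :
    ∃ x ∈ closure S, x * g ∈ closure S := by
  have hg : g ∈ Subgroup.closure S := hgen ▸ Subgroup.mem_top g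
  induction hg using Subgroup.closure_induction with
  | mem s hs => exact ⟨1, one_mem _, by simpa using subset_closure hs⟩
  | one => exact ⟨1, one_mem _, by simp⟩
  | mul g h _ _ ihg ihh =>
    obtain ⟨x, hx, hxg⟩ := ihg
    obtain ⟨y, hy, hyh⟩ := ihh
    obtain ⟨r, hr, r', hr', hrr'⟩ := hleft _ hxg y hy
    refine ⟨r * x, mul_mem hr hx, ?_⟩
    rw [show r * x * (g * h) = r * (x * g) * h by group, hrr', mul_assoc]
    exact mul_mem hr' hyh
  | inv g _ ih =>
    obtain ⟨x, hx, hxg⟩ := ih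
    exact ⟨x * g, hxg, by simpa using hx⟩

theorem exists_mul_mem_closure_and_mul_mem_closure (hgen : Subgroup.closure S = ⊤)
    (hleft : (closure S).HasCommonLeftMultiples) (a b : G) :
    ∃ z ∈ closure S, z * a ∈ closure S ∧ z * b ∈ closure S := by
  obtain ⟨x, hx, hxa⟩ := exists_mul_mem_closure hgen hleft a
  obtain ⟨y, hy, hyb⟩ := exists_mul_mem_closure hgen hleft b
  obtain ⟨r, hr, r', hr', hrr'⟩ := hleft x hx y hy
  refine ⟨r * x, mul_mem hr hx, by rw [mul_assoc]; exact mul_mem hr hxa, ?_⟩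
  rw [hrr', mul_assoc]
  exact mul_mem hr' hyb

theorem exists_isLCM (hgen : Subgroup.closure S = ⊤) (hdeg : ∀ s ∈ S, 0 < (deg s).toAdd)
    (hatom : ∀ s ∈ S, ∀ s' ∈ S, ∃ c, (closure S).IsLCM s s' c)
    (hleft : (closure S).HasCommonLeftMultiples) (hright : (closure S).HasCommonRightMultiples)
    (a b : G) : ∃ l, (closure S).IsLCM a b l := by
  obtain ⟨z, -, hza, hzb⟩ := exists_mul_mem_closure_and_mul_mem_closure hgen hleft a b
  obtain ⟨r, hr, r', hr', hrr'⟩ := hright _ hza _ hzb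
  obtain ⟨l, hl⟩ := exists_isLCM_of_leftDvd hdeg hatom hza hzb (leftDvd_mul _ hr)
    (hrr' ▸ leftDvd_mul _ hr')
  exact ⟨z⁻¹ * l, by simpa [← mul_assoc] using hl.mul_left z⁻¹⟩

/- A common left divisor `g` of maximal degree is a gcd: for any other common left divisor `d`,
`lcm (g, d)` is again one, and it has degree at least that of `g`, so it equals `g`. -/
theorem exists_isGCD (hgen : Subgroup.closure S = ⊤) (hdeg : ∀ s ∈ S, 0 < (deg s).toAdd)
    (hatom : ∀ s ∈ S, ∀ s' ∈ S, ∃ c, (closure S).IsLCM s s' c)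
    (hleft : (closure S).HasCommonLeftMultiples) (hright : (closure S).HasCommonRightMultiples)
    (a b : G) : ∃ d, (closure S).IsGCD a b d := by
  obtain ⟨z, -, hza, hzb⟩ := exists_mul_mem_closure_and_mul_mem_closure hgen hleft a b
  obtain ⟨_, ⟨g, hga, hgb, rfl⟩, hmax⟩ := Int.exists_greatest_of_bdd
    (P := fun k => ∃ d, (closure S).LeftDvd d a ∧ (closure S).LeftDvd d b ∧ (deg d).toAdd = k)
    ⟨(deg a).toAdd, by rintro _ ⟨d, hda, -, rfl⟩; exact hda.toAdd_deg_le hdeg⟩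
    ⟨_, z⁻¹, ⟨z * a, hza, by group⟩, ⟨z * b, hzb, by group⟩, rfl⟩
  refine ⟨g, hga, hgb, fun d hda hdb => ?_⟩
  obtain ⟨l, hl⟩ := exists_isLCM hgen hdeg hatom hleft hright g d
  obtain ⟨c, hc, rfl⟩ := hl.1
  have hc₁ : c = 1 := by
    refine eq_one_of_toAdd_deg_nonpos hdeg hc ?_
    have := hmax _ ⟨_, hl.2.2 a hga hda, hl.2.2 b hgb hdb, rfl⟩
    rw [map_mul, toAdd_mul] at this
    linarith
  simpa [hc₁] using hl.2.1

end GarsideCriterion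

end Submonoid

section OreEmbedding

open OreLocalization

variable {M : Type*} [Monoid M]

noncomputable abbrev oreSetTop [IsRightCancelMul M] (h : ∀ a b : M, ∃ c d : M, c * a = d * b) :
    OreSet (⊤ : Submonoid M) where
  ore_right_cancel _ _ _ hr := ⟨1, by rw [mul_right_cancel hr]⟩
  oreNum a s := (h a s).choose_spec.choose
  oreDenom a s := ⟨(h a s).choose, trivial⟩
  ore_eq a s := (h a s).choose_spec.choose_spec

variable [OreSet (⊤ : Submonoid M)]

noncomputable def toFractionUnits : M →* (OreLocalization (⊤ : Submonoid M) M)ˣ :=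
  IsUnit.liftRight numeratorHom fun x =>
    numerator_isUnit (⟨x, Submonoid.mem_top x⟩ : (⊤ : Submonoid M))

theorem toFractionUnits_injective [IsLeftCancelMul M] :
    Function.Injective (toFractionUnits (M := M)) := by
  intro a b h
  have h' := congrArg Units.val h
  simp only [toFractionUnits, IsUnit.coe_liftRight, numeratorHom_apply, oreDiv_eq_iff] at h'
  obtain ⟨u, v, h₁, h₂⟩ := h'
  have huv : (u : M) = v := by simpa using h₂
  simp only [Submonoid.smul_def, smul_eq_mul, huv] at h₁
  exact (mul_left_cancel h₁).symm

end OreEmbedding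

namespace BraidWord

variable {m : ℕ}

def Far (i j : Fin m) : Prop := (i : ℕ) + 1 < j ∨ (j : ℕ) + 1 < i

def Adj (i j : Fin m) : Prop := (j : ℕ) = i + 1 ∨ (i : ℕ) = j + 1

instance : DecidableRel (Adj (m := m)) := fun _ _ => inferInstanceAs (Decidable (_ ∨ _))

variable {i j k a : Fin m}

theorem Far.symm (h : Far i j) : Far j i := Or.symm h

theorem Adj.symm (h : Adj i j) : Adj j i := Or.symm h

theorem Far.ne (h : Far i j) : i ≠ j := by rintro rfl; unfold Far at h; omega

theorem Adj.ne (h : Adj i j) : i ≠ j := by rintro rfl; unfold Adj at h; omega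

theorem Far.not_adj (h : Far i j) : ¬Adj i j := by unfold Far at h; unfold Adj; omega

theorem far_or_adj (h : i ≠ j) : Far i j ∨ Adj i j := by
  have := Fin.val_ne_of_ne h
  unfold Far Adj; omega

inductive Step : List (Fin m) → List (Fin m) → Prop
  | far {i j : Fin m} (h : Far i j) (x y : List (Fin m)) :
      Step (x ++ i :: j :: y) (x ++ j :: i :: y)
  | adj {i j : Fin m} (h : Adj i j) (x y : List (Fin m)) :
      Step (x ++ i :: j :: i :: y) (x ++ j :: i :: j :: y)

def Eqv : List (Fin m) → List (Fin m) → Prop := Relation.ReflTransGen Step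

local infix:50 " ≈ᵇ " => Eqv

variable {u v w x y p : List (Fin m)}

namespace Step

theorem symm (h : Step u v) : Step v u := by
  cases h with
  | far h x y => exact .far h.symm x y
  | adj h x y => exact .adj h.symm x y

theorem length_eq (h : Step u v) : u.length = v.length := by cases h <;> simp

theorem two_le_length (h : Step u v) : 2 ≤ u.length := by cases h <;> simp <;> omega

theorem append_left (h : Step u v) (x : List (Fin m)) : Step (x ++ u) (x ++ v) := by
  cases h with
  | far h a b => simpa using Step.far h (x ++ a) b
  | adj h a b => simpa using Step.adj h (x ++ a) b

theorem append_right (h : Step u v) (y : List (Fin m)) : Step (u ++ y) (v ++ y) := by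
  cases h with
  | far h a b => simpa using Step.far h a (b ++ y)
  | adj h a b => simpa using Step.adj h a (b ++ y)

theorem reverse (h : Step u v) : Step u.reverse v.reverse := by
  cases h with
  | far h a b => simpa using Step.far h.symm b.reverse a.reverse
  | adj h a b => simpa using Step.adj h b.reverse a.reverse

end Step

namespace Eqv

@[refl] theorem refl (u : List (Fin m)) : u ≈ᵇ u := Relation.ReflTransGen.refl

theorem trans (h₁ : u ≈ᵇ v) (h₂ : v ≈ᵇ w) : u ≈ᵇ w := Relation.ReflTransGen.trans h₁ h₂

instance : Trans (Eqv (m := m)) Eqv Eqv := ⟨trans⟩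

theorem of_step (h : Step u v) : u ≈ᵇ v := Relation.ReflTransGen.single h

theorem symm (h : u ≈ᵇ v) : v ≈ᵇ u := by
  induction h with
  | refl => rfl
  | tail _ hs ih => exact (of_step hs.symm).trans ih

theorem map {m' : ℕ} {f : List (Fin m) → List (Fin m')} (hf : ∀ u v, Step u v → Step (f u) (f v))
    (h : u ≈ᵇ v) : f u ≈ᵇ f v :=
  Relation.ReflTransGen.lift f hf _ _ h

theorem append_left (h : u ≈ᵇ v) (x : List (Fin m)) : x ++ u ≈ᵇ x ++ v :=
  h.map fun _ _ hs => hs.append_left x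

theorem append_right (h : u ≈ᵇ v) (y : List (Fin m)) : u ++ y ≈ᵇ v ++ y :=
  h.map fun _ _ hs => hs.append_right y

theorem append (h₁ : u ≈ᵇ v) (h₂ : x ≈ᵇ y) : u ++ x ≈ᵇ v ++ y :=
  (h₁.append_right x).trans (h₂.append_left v)

theorem cons (h : u ≈ᵇ v) (a : Fin m) : a :: u ≈ᵇ a :: v := h.append_left [a]

theorem reverse (h : u ≈ᵇ v) : u.reverse ≈ᵇ v.reverse := h.map fun _ _ hs => hs.reverse

theorem length_eq (h : u ≈ᵇ v) : u.length = v.length := by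
  induction h with
  | refl => rfl
  | tail _ hs ih => exact ih.trans hs.length_eq

theorem eq_of_length_lt_two (h : u ≈ᵇ v) (hu : u.length < 2) : u = v := by
  induction h with
  | refl => rfl
  | tail _ hs ih => subst ih; exact absurd hs.two_le_length (by omega)

end Eqv

theorem eqv_swap (h : Far i j) (y : List (Fin m)) : i :: j :: y ≈ᵇ j :: i :: y :=
  .of_step (.far h [] y)

theorem eqv_braid (h : Adj i j) (y : List (Fin m)) : i :: j :: i :: y ≈ᵇ j :: i :: j :: y :=
  .of_step (.adj h [] y)

-- `i :: complement i j ≈ᵇ j :: complement j i` is the least common multiple of `i` and `j`.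
def complement (i j : Fin m) : List (Fin m) :=
  if i = j then [] else if Adj i j then [j, i] else [j]

@[simp] theorem complement_self (i : Fin m) : complement i i = [] := by simp [complement]

theorem complement_append_of_far (h : Far i j) (y : List (Fin m)) :
    complement i j ++ y = j :: y := by
  simp [complement, h.ne, h.not_adj]

theorem complement_append_of_adj (h : Adj i j) (y : List (Fin m)) :
    complement i j ++ y = j :: i :: y := by
  simp [complement, h.ne, h]

theorem cons_complement_eqv (i j : Fin m) (y : List (Fin m)) :
    i :: (complement i j ++ y) ≈ᵇ j :: (complement j i ++ y) := by
  rcases eq_or_ne i j with rfl | hij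
  · rfl
  rcases far_or_adj hij with h | h
  · rw [complement_append_of_far h, complement_append_of_far h.symm]; exact eqv_swap h y
  · rw [complement_append_of_adj h, complement_append_of_adj h.symm]; exact eqv_braid h y

theorem length_complement_comm (i j : Fin m) :
    (complement i j).length = (complement j i).length := by
  simpa using (cons_complement_eqv i j []).length_eq

theorem Step.cons_cases (h : Step (a :: p) w) :
    (∃ p', Step p p' ∧ w = a :: p') ∨
      ∃ b y, b ≠ a ∧ p = complement a b ++ y ∧ w = b :: (complement b a ++ y) := by
  generalize hz : a :: p = z at h
  cases h with
  | far hf x y =>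
    rcases x with _ | ⟨c, x⟩
    · obtain ⟨rfl, rfl⟩ := List.cons.inj hz
      exact .inr ⟨_, y, hf.ne.symm, (complement_append_of_far hf y).symm,
        by rw [complement_append_of_far hf.symm]; rfl⟩
    · obtain ⟨rfl, rfl⟩ := List.cons.inj hz
      exact .inl ⟨_, .far hf x y, rfl⟩
  | adj ha x y =>
    rcases x with _ | ⟨c, x⟩
    · obtain ⟨rfl, rfl⟩ := List.cons.inj hz
      exact .inr ⟨_, y, ha.ne.symm, (complement_append_of_adj ha y).symm,
        by rw [complement_append_of_adj ha.symm]; rfl⟩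
    · obtain ⟨rfl, rfl⟩ := List.cons.inj hz
      exact .inl ⟨_, .adj ha x y, rfl⟩

def KeyLemmaUpTo (m N : ℕ) : Prop :=
  ∀ ⦃u v : List (Fin m)⦄, u.length ≤ N → ∀ ⦃i j : Fin m⦄, i :: u ≈ᵇ j :: v →
    ∃ w, u ≈ᵇ complement i j ++ w ∧ v ≈ᵇ complement j i ++ w

namespace KeyLemmaUpTo

variable {N : ℕ} (H : KeyLemmaUpTo m N)
include H

theorem far (hf : Far i j) (hu : u.length ≤ N) (h : i :: u ≈ᵇ j :: v) :
    ∃ w, u ≈ᵇ j :: w ∧ v ≈ᵇ i :: w := by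
  simpa [complement_append_of_far hf, complement_append_of_far hf.symm] using H hu h

theorem adj (ha : Adj i j) (hu : u.length ≤ N) (h : i :: u ≈ᵇ j :: v) :
    ∃ w, u ≈ᵇ j :: i :: w ∧ v ≈ᵇ i :: j :: w := by
  simpa [complement_append_of_adj ha, complement_append_of_adj ha.symm] using H hu h

theorem cancel (hu : u.length ≤ N) (h : a :: u ≈ᵇ a :: v) : u ≈ᵇ v := by
  obtain ⟨w, hu, hv⟩ := H hu h
  simp only [complement_self, List.nil_append] at hu hv
  exact hu.trans hv.symm

theorem cancel_append (x : List (Fin m)) (hu : (x ++ u).length ≤ N + 1) (h : x ++ u ≈ᵇ x ++ v) :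
    u ≈ᵇ v := by
  induction x with
  | nil => exact h
  | cons a x ih => exact ih (by simp at hu ⊢; omega) (H.cancel (by simpa using hu) h)

end KeyLemmaUpTo

-- The cube condition on `i, j, k`: it carries the key lemma across a relation applied at the
-- head of a word (`KeyLemmaUpTo.succ`).
def Cube (m N : ℕ) (i j k : Fin m) : Prop :=
  ∀ ⦃t s : List (Fin m)⦄, (complement k i ++ t).length ≤ N + 1 →
    complement k i ++ t ≈ᵇ complement k j ++ s →
    ∃ w, complement i k ++ t ≈ᵇ complement i j ++ w ∧ complement j k ++ s ≈ᵇ complement j i ++ w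

variable {N : ℕ}

theorem Cube.symm (hc : Cube m N i j k) : Cube m N j i k := fun _ _ hlen h => by
  obtain ⟨w, h₁, h₂⟩ := hc (h.length_eq ▸ hlen) h.symm
  exact ⟨w, h₂, h₁⟩

section CubeCases

variable (H : KeyLemmaUpTo m N)
include H

theorem cube_far_far_far (hij : Far i j) (hik : Far i k) (hjk : Far j k) : Cube m N i j k := by
  intro t s hlen h
  simp only [complement_append_of_far hik.symm, complement_append_of_far hjk.symm,
    complement_append_of_far hik, complement_append_of_far hij, complement_append_of_far hjk,
    complement_append_of_far hij.symm] at h hlen ⊢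
  obtain ⟨w, ht, hs⟩ := H.far hij (by simpa using hlen) h
  exact ⟨k :: w, (ht.cons k).trans (eqv_swap hjk.symm w), (hs.cons k).trans (eqv_swap hik.symm w)⟩

theorem cube_far_adj_far (hij : Far i j) (hik : Adj i k) (hjk : Far j k) : Cube m N i j k := by
  intro t s hlen h
  simp only [complement_append_of_adj hik.symm, complement_append_of_far hjk.symm,
    complement_append_of_adj hik, complement_append_of_far hij, complement_append_of_far hjk,
    complement_append_of_far hij.symm] at h hlen ⊢
  obtain ⟨s₀, h₁, h₂⟩ := H.far hij (by simpa using hlen) h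
  obtain ⟨s₁, h₃, h₄⟩ := H.far hjk.symm (by simp at hlen; omega) h₁
  refine ⟨k :: i :: s₁, ?_, ?_⟩
  · calc k :: i :: t ≈ᵇ k :: i :: j :: s₁ := (h₃.cons i).cons k
      _ ≈ᵇ k :: j :: i :: s₁ := (eqv_swap hij s₁).cons k
      _ ≈ᵇ j :: k :: i :: s₁ := eqv_swap hjk.symm _
  · calc k :: s ≈ᵇ k :: i :: s₀ := h₂.cons k
      _ ≈ᵇ k :: i :: k :: s₁ := (h₄.cons i).cons k
      _ ≈ᵇ i :: k :: i :: s₁ := eqv_braid hik.symm s₁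

theorem cube_far_adj_adj (hij : Far i j) (hik : Adj i k) (hjk : Adj j k) : Cube m N i j k := by
  intro t s hlen h
  simp only [complement_append_of_adj hik.symm, complement_append_of_adj hjk.symm,
    complement_append_of_adj hik, complement_append_of_far hij, complement_append_of_adj hjk,
    complement_append_of_far hij.symm] at h hlen ⊢
  have hts := h.length_eq
  simp only [List.length_cons] at hlen hts
  obtain ⟨s₀, h₁, h₂⟩ := H.far hij (by simp; omega) h
  obtain ⟨s₁, h₃, h₄⟩ := H.adj hjk.symm (by omega) h₁
  obtain ⟨s₂, h₅, h₆⟩ := H.adj hik.symm (by omega) h₂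
  have ht := h₃.length_eq
  simp only [List.length_cons] at ht
  have h₇ : j :: s₁ ≈ᵇ i :: s₂ := H.cancel (by simp; omega) (h₄.symm.trans h₆)
  obtain ⟨s₃, h₈, h₉⟩ := H.far hij.symm (by omega) h₇
  refine ⟨k :: i :: j :: k :: s₃, ?_, ?_⟩
  · calc k :: i :: t ≈ᵇ k :: i :: j :: k :: s₁ := (h₃.cons i).cons k
      _ ≈ᵇ k :: i :: j :: k :: i :: s₃ := (((h₈.cons k).cons j).cons i).cons k
      _ ≈ᵇ k :: j :: i :: k :: i :: s₃ := (eqv_swap hij _).cons k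
      _ ≈ᵇ k :: j :: k :: i :: k :: s₃ := ((eqv_braid hik s₃).cons j).cons k
      _ ≈ᵇ j :: k :: j :: i :: k :: s₃ := eqv_braid hjk.symm _
      _ ≈ᵇ j :: k :: i :: j :: k :: s₃ := ((eqv_swap hij.symm _).cons k).cons j
  · calc k :: j :: s ≈ᵇ k :: j :: i :: k :: s₂ := (h₅.cons j).cons k
      _ ≈ᵇ k :: j :: i :: k :: j :: s₃ := (((h₉.cons k).cons i).cons j).cons k
      _ ≈ᵇ k :: i :: j :: k :: j :: s₃ := (eqv_swap hij.symm _).cons k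
      _ ≈ᵇ k :: i :: k :: j :: k :: s₃ := ((eqv_braid hjk s₃).cons i).cons k
      _ ≈ᵇ i :: k :: i :: j :: k :: s₃ := eqv_braid hik.symm _

theorem cube_adj_far_far (hij : Adj i j) (hik : Far i k) (hjk : Far j k) : Cube m N i j k := by
  intro t s hlen h
  simp only [complement_append_of_far hik.symm, complement_append_of_far hjk.symm,
    complement_append_of_far hik, complement_append_of_adj hij, complement_append_of_far hjk,
    complement_append_of_adj hij.symm] at h hlen ⊢
  obtain ⟨w, ht, hs⟩ := H.adj hij (by simpa using hlen) h
  refine ⟨k :: w, ?_, ?_⟩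
  · calc k :: t ≈ᵇ k :: j :: i :: w := ht.cons k
      _ ≈ᵇ j :: k :: i :: w := eqv_swap hjk.symm _
      _ ≈ᵇ j :: i :: k :: w := (eqv_swap hik.symm w).cons j
  · calc k :: s ≈ᵇ k :: i :: j :: w := hs.cons k
      _ ≈ᵇ i :: k :: j :: w := eqv_swap hik.symm _
      _ ≈ᵇ i :: j :: k :: w := (eqv_swap hjk.symm w).cons i

theorem cube_adj_adj_far (hij : Adj i j) (hik : Adj i k) (hjk : Far j k) : Cube m N i j k := by
  intro t s hlen h
  simp only [complement_append_of_adj hik.symm, complement_append_of_far hjk.symm,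
    complement_append_of_adj hik, complement_append_of_adj hij, complement_append_of_far hjk,
    complement_append_of_adj hij.symm] at h hlen ⊢
  simp only [List.length_cons] at hlen
  obtain ⟨s₀, h₁, h₂⟩ := H.adj hij (by simp; omega) h
  have hs₀ := h₁.length_eq
  simp only [List.length_cons] at hs₀
  obtain ⟨s₁, h₃, h₄⟩ := H.far hjk.symm (by omega) h₁
  obtain ⟨s₂, h₅, h₆⟩ := H.adj hik (by omega) h₄
  refine ⟨k :: i :: j :: s₂, ?_, ?_⟩
  · calc k :: i :: t ≈ᵇ k :: i :: j :: s₁ := (h₃.cons i).cons k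
      _ ≈ᵇ k :: i :: j :: i :: k :: s₂ := ((h₆.cons j).cons i).cons k
      _ ≈ᵇ k :: j :: i :: j :: k :: s₂ := (eqv_braid hij _).cons k
      _ ≈ᵇ j :: k :: i :: j :: k :: s₂ := eqv_swap hjk.symm _
      _ ≈ᵇ j :: k :: i :: k :: j :: s₂ := (((eqv_swap hjk s₂).cons i).cons k).cons j
      _ ≈ᵇ j :: i :: k :: i :: j :: s₂ := (eqv_braid hik.symm _).cons j
  · calc k :: s ≈ᵇ k :: i :: j :: s₀ := h₂.cons k
      _ ≈ᵇ k :: i :: j :: k :: i :: s₂ := ((h₅.cons j).cons i).cons k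
      _ ≈ᵇ k :: i :: k :: j :: i :: s₂ := ((eqv_swap hjk _).cons i).cons k
      _ ≈ᵇ i :: k :: i :: j :: i :: s₂ := eqv_braid hik.symm _
      _ ≈ᵇ i :: k :: j :: i :: j :: s₂ := ((eqv_braid hij s₂).cons k).cons i
      _ ≈ᵇ i :: j :: k :: i :: j :: s₂ := (eqv_swap hjk.symm _).cons i

theorem cube (hki : k ≠ i) : Cube m N i j k := by
  rcases eq_or_ne k j with rfl | hkj
  · intro t s _ h
    exact ⟨t, .refl _, by simpa using h.symm⟩
  rcases eq_or_ne i j with rfl | hij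
  · intro t s hlen h
    exact ⟨complement i k ++ t, by simp [Eqv.refl],
      by simpa using ((H.cancel_append _ hlen h).append_left _).symm⟩
  rcases far_or_adj hij with hij | hij <;> rcases far_or_adj hki.symm with hik | hik <;>
    rcases far_or_adj hkj.symm with hjk | hjk
  · exact cube_far_far_far H hij hik hjk
  · exact (cube_far_adj_far H hij.symm hjk hik).symm
  · exact cube_far_adj_far H hij hik hjk
  · exact cube_far_adj_adj H hij hik hjk
  · exact cube_adj_far_far H hij hik hjk
  · exact (cube_adj_adj_far H hij.symm hjk hik).symm
  · exact cube_adj_adj_far H hij hik hjk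
  · unfold Adj at hij hik hjk; omega

end CubeCases

theorem keyLemmaUpTo_zero : KeyLemmaUpTo m 0 := by
  intro u v hu i j h
  obtain rfl : u = [] := List.eq_nil_of_length_eq_zero (by omega)
  obtain ⟨rfl, rfl⟩ := List.cons.inj (h.eq_of_length_lt_two (by simp)).symm
  exact ⟨[], by simp [Eqv.refl], by simp [Eqv.refl]⟩

theorem KeyLemmaUpTo.succ (H : KeyLemmaUpTo m N) : KeyLemmaUpTo m (N + 1) := by
  intro u v hu i j h
  suffices ∀ z, Relation.ReflTransGen Step z (j :: v) → ∀ a p, z = a :: p → p.length ≤ N + 1 →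
      ∃ w, p ≈ᵇ complement a j ++ w ∧ v ≈ᵇ complement j a ++ w from this _ h i u rfl hu
  intro z hz
  induction hz using Relation.ReflTransGen.head_induction_on with
  | refl =>
    rintro a p hap -
    obtain ⟨rfl, rfl⟩ := List.cons.inj hap.symm
    exact ⟨p, by simp [Eqv.refl], by simp [Eqv.refl]⟩
  | head hstep _ ih =>
    rintro a p rfl hp
    rcases hstep.cons_cases with ⟨p', hpp', rfl⟩ | ⟨b, y, hba, rfl, rfl⟩
    · obtain ⟨w, h₁, h₂⟩ := ih a p' rfl (hpp'.length_eq ▸ hp)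
      exact ⟨w, (Eqv.of_step hpp').trans h₁, h₂⟩
    · have hlen : (complement b a ++ y).length ≤ N + 1 := by
        simpa [length_complement_comm b a] using hp
      obtain ⟨w₁, h₁, h₂⟩ := ih b _ rfl hlen
      obtain ⟨w, h₃, h₄⟩ := cube H hba hlen h₁
      exact ⟨w, h₃, h₂.trans h₄⟩

theorem keyLemma : ∀ N, KeyLemmaUpTo m N
  | 0 => keyLemmaUpTo_zero
  | N + 1 => (keyLemma N).succ

theorem exists_of_cons_eqv_cons (h : i :: u ≈ᵇ j :: v) :
    ∃ w, u ≈ᵇ complement i j ++ w ∧ v ≈ᵇ complement j i ++ w :=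
  keyLemma u.length le_rfl h

theorem Eqv.cancel_left (h : x ++ u ≈ᵇ x ++ v) : u ≈ᵇ v :=
  (keyLemma _).cancel_append x (Nat.le_succ _) h

theorem Eqv.cancel_right (h : u ++ x ≈ᵇ v ++ x) : u ≈ᵇ v := by
  have h' : x.reverse ++ u.reverse ≈ᵇ x.reverse ++ v.reverse := by simpa using h.reverse
  simpa using h'.cancel_left.reverse

theorem Step.map_castSucc (h : Step u v) : Step (u.map Fin.castSucc) (v.map Fin.castSucc) := by
  cases h with
  | far h x y => simpa using Step.far (i := Fin.castSucc _) (j := Fin.castSucc _) h (x.map _) _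
  | adj h x y => simpa using Step.adj (i := Fin.castSucc _) (j := Fin.castSucc _) h (x.map _) _

theorem Eqv.map_castSucc (h : u ≈ᵇ v) : u.map Fin.castSucc ≈ᵇ v.map Fin.castSucc :=
  h.map fun _ _ hs => hs.map_castSucc

theorem cons_eqv_append_singleton (hfar : ∀ a ∈ u, Far k a) : k :: u ≈ᵇ u ++ [k] := by
  induction u with
  | nil => rfl
  | cons a u ih =>
    simp only [List.mem_cons, forall_eq_or_imp] at hfar
    exact (eqv_swap hfar.1 u).trans ((ih hfar.2).cons a)

theorem last_cons_eqv_append_last (u : List (Fin m)) :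
    Fin.last (m + 1) :: (u.map Fin.castSucc).map Fin.castSucc ≈ᵇ
      (u.map Fin.castSucc).map Fin.castSucc ++ [Fin.last (m + 1)] :=
  cons_eqv_append_singleton fun a ha => by
    simp only [List.map_map, List.mem_map, Function.comp_apply] at ha
    obtain ⟨b, -, rfl⟩ := ha
    exact Or.inr (by simp)

def desc (m : ℕ) : List (Fin m) := (List.finRange m).reverse

-- Garside's fundamental word `Δ = (0) (1 0) (2 1 0) ⋯ (m-1 ⋯ 1 0)`.
def delta : (m : ℕ) → List (Fin m)
  | 0 => []
  | m + 1 => (delta m).map Fin.castSucc ++ desc (m + 1)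

theorem desc_succ (m : ℕ) : desc (m + 1) = Fin.last m :: (desc m).map Fin.castSucc := by
  simp [desc, List.finRange_succ_last, List.map_reverse]

theorem desc_succ_eq_append (m : ℕ) : desc (m + 1) = (desc m).map Fin.succ ++ [0] := by
  simp [desc, List.finRange_succ, List.map_reverse]

theorem desc_succ_append_succ : ∀ {m : ℕ} (j : Fin m),
    desc (m + 1) ++ [j.succ] ≈ᵇ j.castSucc :: desc (m + 1)
  | m + 1, j => by
    induction j using Fin.lastCases with
    | last =>
      rw [desc_succ (m + 1), desc_succ m]
      simp only [List.map_cons, List.cons_append, Fin.succ_last]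
      refine (((last_cons_eqv_append_last _).symm.cons _).cons _).trans (eqv_braid (Or.inr ?_) _)
      simp
    | cast j =>
      rw [desc_succ (m + 1), Fin.succ_castSucc]
      calc Fin.last (m + 1) :: ((desc (m + 1)).map Fin.castSucc ++ [j.succ.castSucc])
          = Fin.last (m + 1) :: (desc (m + 1) ++ [j.succ]).map Fin.castSucc := by simp
        _ ≈ᵇ Fin.last (m + 1) :: (j.castSucc :: desc (m + 1)).map Fin.castSucc :=
          (desc_succ_append_succ j).map_castSucc.cons _
        _ ≈ᵇ j.castSucc.castSucc :: Fin.last (m + 1) :: (desc (m + 1)).map Fin.castSucc :=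
          eqv_swap (Or.inr (by simp)) _

theorem reverse_desc_append_castSucc (j : Fin m) :
    (desc (m + 1)).reverse ++ [j.castSucc] ≈ᵇ j.succ :: (desc (m + 1)).reverse := by
  simpa using (desc_succ_append_succ j).reverse.symm

theorem reverse_desc_append_delta : ∀ m : ℕ,
    (desc (m + 1)).reverse ++ (delta m).map Fin.castSucc ≈ᵇ delta (m + 1)
  | 0 => by simp [delta, desc, List.finRange_succ]; rfl
  | m + 1 => by
    calc (desc (m + 2)).reverse ++ (delta (m + 1)).map Fin.castSucc
        = ((desc (m + 1)).reverse.map Fin.castSucc ++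
            Fin.last (m + 1) :: ((delta m).map Fin.castSucc).map Fin.castSucc) ++
            (desc (m + 1)).map Fin.castSucc := by
          simp [desc_succ (m + 1), delta, List.map_reverse]
      _ ≈ᵇ ((desc (m + 1)).reverse.map Fin.castSucc ++
            (((delta m).map Fin.castSucc).map Fin.castSucc ++ [Fin.last (m + 1)])) ++
            (desc (m + 1)).map Fin.castSucc :=
          ((last_cons_eqv_append_last _).append_left _).append_right _
      _ = ((desc (m + 1)).reverse ++ (delta m).map Fin.castSucc).map Fin.castSucc ++
            desc (m + 2) := by
          simp [desc_succ (m + 1)]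
      _ ≈ᵇ delta (m + 2) := (reverse_desc_append_delta m).map_castSucc.append_right _

theorem delta_append_zero : ∀ m : ℕ, delta (m + 1) ++ [0] ≈ᵇ Fin.last m :: delta (m + 1)
  | 0 => by simp [delta, desc, List.finRange_succ]; rfl
  | m + 1 => by
    calc delta (m + 2) ++ [0]
        ≈ᵇ (desc (m + 2)).reverse ++ (delta (m + 1) ++ [0]).map Fin.castSucc := by
          simpa using (reverse_desc_append_delta (m + 1)).symm.append_right [0]
      _ ≈ᵇ (desc (m + 2)).reverse ++ (Fin.last m :: delta (m + 1)).map Fin.castSucc :=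
        (delta_append_zero m).map_castSucc.append_left _
      _ = ((desc (m + 2)).reverse ++ [(Fin.last m).castSucc]) ++
          (delta (m + 1)).map Fin.castSucc := by simp
      _ ≈ᵇ (Fin.last m).succ :: (desc (m + 2)).reverse ++ (delta (m + 1)).map Fin.castSucc :=
        (reverse_desc_append_castSucc _).append_right _
      _ ≈ᵇ Fin.last (m + 1) :: delta (m + 2) := by
        simpa using (reverse_desc_append_delta (m + 1)).cons (Fin.last (m + 1))

theorem delta_append_singleton : ∀ {m : ℕ} (i : Fin m), delta m ++ [i] ≈ᵇ i.rev :: delta m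
  | m + 1, i => by
    induction i using Fin.cases with
    | zero => simpa using delta_append_zero m
    | succ j =>
      calc delta (m + 1) ++ [j.succ]
          = (delta m).map Fin.castSucc ++ (desc (m + 1) ++ [j.succ]) := by simp [delta]
        _ ≈ᵇ (delta m).map Fin.castSucc ++ j.castSucc :: desc (m + 1) :=
          (desc_succ_append_succ j).append_left _
        _ = (delta m ++ [j]).map Fin.castSucc ++ desc (m + 1) := by simp
        _ ≈ᵇ (j.rev :: delta m).map Fin.castSucc ++ desc (m + 1) :=
          (delta_append_singleton j).map_castSucc.append_right _
        _ = j.succ.rev :: delta (m + 1) := by simp [delta, Fin.rev_succ]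

theorem exists_cons_eqv_delta : ∀ {m : ℕ} (i : Fin m), ∃ c, i :: c ≈ᵇ delta m
  | m + 1, i => by
    induction i using Fin.lastCases with
    | cast j =>
      obtain ⟨c, hc⟩ := exists_cons_eqv_delta j
      exact ⟨c.map Fin.castSucc ++ desc (m + 1), by
        simpa [delta] using hc.map_castSucc.append_right (desc (m + 1))⟩
    | last =>
      -- `Δ` ends with `0` and `Δ 0 ≈ m Δ`: cancelling the final `0` shows that `Δ` starts with `m`.
      have hdelta :
          delta (m + 1) = ((delta m).map Fin.castSucc ++ (desc m).map Fin.succ) ++ [0] := by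
        simp [delta, desc_succ_eq_append]
      refine ⟨(delta m).map Fin.castSucc ++ (desc m).map Fin.succ, Eqv.cancel_right (x := [0]) ?_⟩
      simpa [hdelta] using (delta_append_zero m).symm

def deltaPow (m : ℕ) : ℕ → List (Fin m)
  | 0 => []
  | k + 1 => delta m ++ deltaPow m k

theorem append_delta_eqv (u : List (Fin m)) : u ++ delta m ≈ᵇ delta m ++ u.map Fin.rev := by
  induction u with
  | nil => simp [Eqv.refl]
  | cons a u ih =>
    calc a :: u ++ delta m ≈ᵇ a :: (delta m ++ u.map Fin.rev) := ih.cons a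
      _ ≈ᵇ (delta m ++ [a.rev]) ++ u.map Fin.rev := by
        simpa using (delta_append_singleton a.rev).symm.append_right (u.map Fin.rev)
      _ = delta m ++ (a :: u).map Fin.rev := by simp

theorem exists_append_deltaPow_eqv (u : List (Fin m)) (k : ℕ) :
    ∃ u', u ++ deltaPow m k ≈ᵇ deltaPow m k ++ u' := by
  induction k generalizing u with
  | zero => exact ⟨u, by simp [deltaPow, Eqv.refl]⟩
  | succ k ih =>
    obtain ⟨u', hu'⟩ := ih (u.map Fin.rev)
    refine ⟨u', ?_⟩
    calc u ++ deltaPow m (k + 1) ≈ᵇ delta m ++ u.map Fin.rev ++ deltaPow m k := by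
          simpa [deltaPow] using (append_delta_eqv u).append_right (deltaPow m k)
      _ ≈ᵇ deltaPow m (k + 1) ++ u' := by simpa [deltaPow] using hu'.append_left (delta m)

theorem exists_append_eqv_deltaPow {u : List (Fin m)} {k : ℕ} (hk : u.length ≤ k) :
    ∃ c, u ++ c ≈ᵇ deltaPow m k := by
  induction u generalizing k with
  | nil => exact ⟨deltaPow m k, .refl _⟩
  | cons a u ih =>
    obtain ⟨k, rfl⟩ : ∃ k', k = k' + 1 := ⟨k - 1, by simp at hk; omega⟩
    obtain ⟨c, hc⟩ := ih (k := k) (by simp at hk; omega)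
    obtain ⟨d, hd⟩ := exists_cons_eqv_delta a
    obtain ⟨d', hd'⟩ := exists_append_deltaPow_eqv d k
    refine ⟨c ++ d', ?_⟩
    calc a :: u ++ (c ++ d') = a :: (u ++ c ++ d') := by simp
      _ ≈ᵇ a :: (deltaPow m k ++ d') := (hc.append_right d').cons a
      _ ≈ᵇ a :: (d ++ deltaPow m k) := hd'.symm.cons a
      _ ≈ᵇ deltaPow m (k + 1) := by simpa [deltaPow] using hd.append_right (deltaPow m k)

theorem exists_common_right_multiple (u v : List (Fin m)) : ∃ a b, u ++ a ≈ᵇ v ++ b := by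
  obtain ⟨a, ha⟩ := exists_append_eqv_deltaPow (u := u) (k := u.length + v.length) (by omega)
  obtain ⟨b, hb⟩ := exists_append_eqv_deltaPow (u := v) (k := u.length + v.length) (by omega)
  exact ⟨a, b, ha.trans hb.symm⟩

theorem exists_common_left_multiple (u v : List (Fin m)) : ∃ a b, a ++ u ≈ᵇ b ++ v := by
  obtain ⟨a, b, h⟩ := exists_common_right_multiple u.reverse v.reverse
  exact ⟨a.reverse, b.reverse, by simpa using h.reverse⟩

def braidCon (m : ℕ) : Con (FreeMonoid (Fin m)) where
  r u v := u.toList ≈ᵇ v.toList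
  iseqv := ⟨fun _ => .refl _, Eqv.symm, Eqv.trans⟩
  mul' h₁ h₂ := by simpa only [FreeMonoid.toList_mul] using h₁.append h₂

end BraidWord

abbrev BraidMonoid (m : ℕ) := (BraidWord.braidCon m).Quotient

namespace BraidMonoid

open BraidWord

variable {m : ℕ} {u v : List (Fin m)}

def mk (w : List (Fin m)) : BraidMonoid m := (braidCon m).mk' (FreeMonoid.ofList w)

@[simp] theorem mk_nil : mk ([] : List (Fin m)) = 1 := map_one _

theorem mk_append (u v : List (Fin m)) : mk (u ++ v) = mk u * mk v := by
  simp [mk, FreeMonoid.ofList_append]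

theorem mk_eq_mk_iff : mk u = mk v ↔ Eqv u v := (braidCon m).eq

theorem mk_surjective : Function.Surjective (mk (m := m)) := fun a => by
  obtain ⟨w, rfl⟩ := (braidCon m).mk'_surjective a
  exact ⟨w.toList, by simp [mk]⟩

instance : IsCancelMul (BraidMonoid m) where
  mul_left_cancel a b c h := by
    obtain ⟨x, rfl⟩ := mk_surjective a
    obtain ⟨u, rfl⟩ := mk_surjective b
    obtain ⟨v, rfl⟩ := mk_surjective c
    simp only [← mk_append, mk_eq_mk_iff] at h ⊢
    exact h.cancel_left
  mul_right_cancel a b c h := by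
    obtain ⟨x, rfl⟩ := mk_surjective a
    obtain ⟨u, rfl⟩ := mk_surjective b
    obtain ⟨v, rfl⟩ := mk_surjective c
    simp only [← mk_append, mk_eq_mk_iff] at h ⊢
    exact h.cancel_right

noncomputable instance : OreLocalization.OreSet (⊤ : Submonoid (BraidMonoid m)) :=
  oreSetTop fun a b => by
    obtain ⟨u, rfl⟩ := mk_surjective a
    obtain ⟨v, rfl⟩ := mk_surjective b
    obtain ⟨c, d, h⟩ := exists_common_left_multiple u v
    exact ⟨mk c, mk d, by simpa only [← mk_append, mk_eq_mk_iff] using h⟩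

end BraidMonoid

namespace BraidGroup

open BraidWord Submonoid

variable {n : ℕ} {u v : List (Fin (n - 1))}

def ofWord (w : List (Fin (n - 1))) : BraidGroup n := (w.map (braidGen n)).prod

@[simp] theorem ofWord_nil : ofWord (n := n) [] = 1 := rfl

@[simp] theorem ofWord_cons (i : Fin (n - 1)) (w : List (Fin (n - 1))) :
    ofWord (i :: w) = braidGen n i * ofWord w := by
  simp [ofWord]

@[simp] theorem ofWord_append (u v : List (Fin (n - 1))) :
    ofWord (u ++ v) = ofWord u * ofWord v := by
  simp [ofWord]

theorem mem_posBraid_iff {p : BraidGroup n} : p ∈ posBraid n ↔ ∃ w, ofWord w = p := by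
  rw [posBraid, ← FreeMonoid.mrange_lift]
  constructor
  · rintro ⟨l, rfl⟩
    exact ⟨l.toList, by simp [ofWord, FreeMonoid.lift_apply]⟩
  · rintro ⟨w, rfl⟩
    exact ⟨FreeMonoid.ofList w, by simp [ofWord, FreeMonoid.lift_ofList]⟩

theorem ofWord_mem_posBraid (w : List (Fin (n - 1))) : ofWord w ∈ posBraid n :=
  mem_posBraid_iff.2 ⟨w, rfl⟩

theorem braidGen_mul_comm_of_far {i j : Fin (n - 1)} (h : Far i j) :
    braidGen n i * braidGen n j = braidGen n j * braidGen n i := by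
  rcases h with h | h
  · exact PresentedGroup.mk_eq_mk_of_mul_inv_mem (Or.inl ⟨i, j, h, rfl⟩)
  · exact (PresentedGroup.mk_eq_mk_of_mul_inv_mem (Or.inl ⟨j, i, h, rfl⟩)).symm

theorem braidGen_braid_of_adj {i j : Fin (n - 1)} (h : Adj i j) :
    braidGen n i * braidGen n j * braidGen n i = braidGen n j * braidGen n i * braidGen n j := by
  rcases h with h | h
  · exact PresentedGroup.mk_eq_mk_of_mul_inv_mem (Or.inr ⟨i, j, h, rfl⟩)
  · exact (PresentedGroup.mk_eq_mk_of_mul_inv_mem (Or.inr ⟨j, i, h, rfl⟩)).symm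

theorem ofWord_eq_of_step (h : Step u v) : ofWord u = ofWord v := by
  cases h with
  | @far i j h x y =>
    have e (t : BraidGroup n) :
        braidGen n i * (braidGen n j * t) = braidGen n j * (braidGen n i * t) := by
      rw [← mul_assoc, braidGen_mul_comm_of_far h, mul_assoc]
    simp only [ofWord_append, ofWord_cons, e]
  | @adj i j h x y =>
    have e (t : BraidGroup n) : braidGen n i * (braidGen n j * (braidGen n i * t)) =
        braidGen n j * (braidGen n i * (braidGen n j * t)) := by
      simp only [← mul_assoc, braidGen_braid_of_adj h]
    simp only [ofWord_append, ofWord_cons, e]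

theorem ofWord_eq_of_eqv (h : Eqv u v) : ofWord u = ofWord v := by
  induction h with
  | refl => rfl
  | tail _ hs ih => exact ih.trans (ofWord_eq_of_step hs)

noncomputable def toFractions (n : ℕ) : BraidGroup n →*
    (OreLocalization (⊤ : Submonoid (BraidMonoid (n - 1))) (BraidMonoid (n - 1)))ˣ :=
  PresentedGroup.toGroup (f := fun i => toFractionUnits (BraidMonoid.mk [i])) <| by
    rintro r (⟨i, j, hij, rfl⟩ | ⟨i, j, hij, rfl⟩) <;>
      simp only [map_mul, map_inv, FreeGroup.lift_apply_of, mul_inv_eq_one] <;>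
      simp only [← map_mul, ← BraidMonoid.mk_append, List.cons_append, List.nil_append]
    · exact congrArg _ (BraidMonoid.mk_eq_mk_iff.2 (eqv_swap (Or.inl hij) []))
    · exact congrArg _ (BraidMonoid.mk_eq_mk_iff.2 (eqv_braid (Or.inl hij) []))

theorem toFractions_ofWord (w : List (Fin (n - 1))) :
    toFractions n (ofWord w) = toFractionUnits (BraidMonoid.mk w) := by
  induction w with
  | nil => simp
  | cons i w ih =>
    rw [ofWord_cons, map_mul, ih, braidGen, toFractions, PresentedGroup.toGroup.of, ← map_mul,
      ← BraidMonoid.mk_append]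
    rfl

theorem ofWord_eq_ofWord_iff : ofWord u = ofWord v ↔ Eqv u v :=
  ⟨fun h => BraidMonoid.mk_eq_mk_iff.1 <| toFractionUnits_injective <| by
    simpa only [toFractions_ofWord] using congrArg (toFractions n) h, ofWord_eq_of_eqv⟩

def exponentSum (n : ℕ) : BraidGroup n →* Multiplicative ℤ :=
  PresentedGroup.toGroup (f := fun _ => Multiplicative.ofAdd 1) <| by
    rintro r (⟨i, j, -, rfl⟩ | ⟨i, j, -, rfl⟩) <;> simp

theorem toAdd_exponentSum_pos :
    ∀ s ∈ Set.range (braidGen n), 0 < (exponentSum n s).toAdd := by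
  rintro _ ⟨i, rfl⟩
  simp [exponentSum, braidGen]

theorem isLCM_braidGen (i j : Fin (n - 1)) :
    (posBraid n).IsLCM (braidGen n i) (braidGen n j) (ofWord (i :: complement i j)) := by
  have hji : ofWord (i :: complement i j) = braidGen n j * ofWord (complement j i) := by
    simpa using ofWord_eq_of_eqv (cons_complement_eqv i j [])
  refine ⟨by simpa using leftDvd_mul _ (ofWord_mem_posBraid _),
    hji ▸ leftDvd_mul _ (ofWord_mem_posBraid _), ?_⟩
  rintro w ⟨x, hx, rfl⟩ ⟨y, hy, hxy⟩
  obtain ⟨u, rfl⟩ := mem_posBraid_iff.1 hx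
  obtain ⟨v, rfl⟩ := mem_posBraid_iff.1 hy
  obtain ⟨c, hc, -⟩ := exists_of_cons_eqv_cons (ofWord_eq_ofWord_iff.1 (by simpa using hxy.symm))
  exact ⟨ofWord c, ofWord_mem_posBraid c, by simp [ofWord_eq_of_eqv hc, mul_assoc]⟩

theorem posBraid_hasCommonRightMultiples : (posBraid n).HasCommonRightMultiples := by
  intro p hp q hq
  obtain ⟨u, rfl⟩ := mem_posBraid_iff.1 hp
  obtain ⟨v, rfl⟩ := mem_posBraid_iff.1 hq
  obtain ⟨a, b, h⟩ := exists_common_right_multiple u v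
  exact ⟨_, ofWord_mem_posBraid a, _, ofWord_mem_posBraid b, by simpa using ofWord_eq_of_eqv h⟩

theorem posBraid_hasCommonLeftMultiples : (posBraid n).HasCommonLeftMultiples := by
  intro p hp q hq
  obtain ⟨u, rfl⟩ := mem_posBraid_iff.1 hp
  obtain ⟨v, rfl⟩ := mem_posBraid_iff.1 hq
  obtain ⟨a, b, h⟩ := exists_common_left_multiple u v
  exact ⟨_, ofWord_mem_posBraid a, _, ofWord_mem_posBraid b, by simpa using ofWord_eq_of_eqv h⟩

end BraidGroup

/-- (Garside lattice structure) The prefix order on `Bₙ` admits greatest common divisors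
and least common multiples. -/
theorem garside_lattice (n : ℕ) (a b : BraidGroup n) :
    (∃ d : BraidGroup n, braidPrefix n d a ∧ braidPrefix n d b ∧
      ∀ d' : BraidGroup n, braidPrefix n d' a → braidPrefix n d' b → braidPrefix n d' d) ∧
    (∃ m : BraidGroup n, braidPrefix n a m ∧ braidPrefix n b m ∧
      ∀ m' : BraidGroup n, braidPrefix n a m' → braidPrefix n b m' → braidPrefix n m m') := by
  have hgen : Subgroup.closure (Set.range (braidGen n)) = ⊤ := PresentedGroup.closure_range_of _
  have hatom : ∀ s ∈ Set.range (braidGen n), ∀ s' ∈ Set.range (braidGen n),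
      ∃ c, (posBraid n).IsLCM s s' c := by
    rintro _ ⟨i, rfl⟩ _ ⟨j, rfl⟩
    exact ⟨_, BraidGroup.isLCM_braidGen i j⟩
  exact ⟨Submonoid.exists_isGCD hgen BraidGroup.toAdd_exponentSum_pos hatom
      BraidGroup.posBraid_hasCommonLeftMultiples BraidGroup.posBraid_hasCommonRightMultiples a b,
    Submonoid.exists_isLCM hgen BraidGroup.toAdd_exponentSum_pos hatom
      BraidGroup.posBraid_hasCommonLeftMultiples BraidGroup.posBraid_hasCommonRightMultiples a b⟩
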